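/- arXiv:2112.05547 — 5 statements merged into one kernel-verified Lean document; each statement's English description precedes it below -/
import Mathlib

section
/- Let (Ω, μ) be a probability space, let R : Ω → ℝ be measurable with 0 ≤ R(ω) < 1 for all ω, let E : Ω → ℝ be measurable, and let ε ∈ ℝ and δ ∈ [0,1]. If μ({ω : −log(1 − R(ω)) ≤ E(ω) + ε}) ≥ 1 − δ, then μ({ω : R(ω) ≤ (1 − exp(−E(ω))) + exp(−E(ω))·ε}) ≥ 1 − δ. -/
open MeasureTheory

/-- **Lemma 1 (lem:paracomparar), abstract form.** If with probability at least `1-δ` the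
cross-entropy of the expected risk `-log (1 - R)` is at most `E + ε`, then with probability at
least `1-δ` the risk `R` is at most `(1 - exp (-E)) + exp (-E) * ε`. -/
theorem stmt_0 {Ω : Type*} [MeasurableSpace Ω] (μ : Measure Ω) [IsProbabilityMeasure μ]
    (R E : Ω → ℝ) (hRmeas : Measurable R) (hEmeas : Measurable E)
    (hR0 : ∀ ω, 0 ≤ R ω) (hR1 : ∀ ω, R ω < 1)
    (ε δ : ℝ) (hδ : δ ∈ Set.Icc (0 : ℝ) 1)
    (h : ENNReal.ofReal (1 - δ) ≤ μ {ω | -Real.log (1 - R ω) ≤ E ω + ε}) :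
    ENNReal.ofReal (1 - δ) ≤
      μ {ω | R ω ≤ (1 - Real.exp (-E ω)) + Real.exp (-E ω) * ε} := by
  refine h.trans (measure_mono ?_)
  intro ω hω
  simp only [Set.mem_setOf_eq] at hω ⊢
  have h1 : (0:ℝ) < 1 - R ω := by linarith [hR1 ω]
  have h2 : Real.exp (-(E ω + ε)) ≤ 1 - R ω := by
    calc Real.exp (-(E ω + ε)) ≤ Real.exp (Real.log (1 - R ω)) := by
          apply Real.exp_le_exp.mpr; linarith
      _ = 1 - R ω := Real.exp_log h1
  have h3 : Real.exp (-(E ω + ε)) = Real.exp (-E ω) * Real.exp (-ε) := by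
    rw [← Real.exp_add]; ring_nf
  have h4 : 1 - ε ≤ Real.exp (-ε) := by
    have := Real.add_one_le_exp (-ε); linarith
  have hE := Real.exp_pos (-E ω)
  nlinarith [mul_le_mul_of_nonneg_left h4 hE.le]
end

section
/- Assume that μ ≪ μ_𝒮 ⊗ μ_ℋ with KL(μ ‖ μ_𝒮 ⊗ μ_ℋ) < ∞, that for μ_ℋ-a.e. h the measures q(h) and κ(h) are mutually absolutely continuous with κ(h) ≪ μ_𝒮, and that the function G(s,h) = (1/n)·log((dq(h)/dμ_𝒮)(s)) is μ-integrable. Then ∫ G dμ ≤ KL(μ ‖ μ_𝒮 ⊗ μ_ℋ)/n. -/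
/-!
Let `ν` be the law of `(s, h)` with `h ∼ μ_ℋ` and `s ∼ q(h)`. Its density with respect to
`μ_𝒮 ⊗ μ_ℋ` is `(s, h) ↦ dq(h)/dμ_𝒮 (s)`, so `n · G = log dν/d(μ_𝒮 ⊗ μ_ℋ)` holds `μ`-a.e.
Since `μ ≪ ν`, the chain rule splits `log dμ/d(μ_𝒮 ⊗ μ_ℋ)` into `log dμ/dν + log dν/d(μ_𝒮 ⊗ μ_ℋ)`,
and Gibbs' inequality `∫ log dμ/dν dμ ≥ 0` gives the bound.
-/

open MeasureTheory ProbabilityTheory Set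

section LogLikelihoodRatio

variable {α : Type*} [MeasurableSpace α] {μ ν ρ : Measure α}

lemma integral_llr_nonneg [IsProbabilityMeasure μ] [IsProbabilityMeasure ν] (hμν : μ ≪ ν) :
    0 ≤ ∫ x, llr μ ν x ∂μ :=
  InformationTheory.toReal_klDiv_of_measure_eq hμν (by simp) ▸ ENNReal.toReal_nonneg

lemma llr_ae_eq_llr_add_log_rnDeriv [SigmaFinite μ] [SigmaFinite ν] [SigmaFinite ρ]
    (hμν : μ ≪ ν) (hμρ : μ ≪ ρ) :
    llr μ ρ =ᵐ[μ] fun x ↦ llr μ ν x + Real.log (ν.rnDeriv ρ x).toReal := by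
  have hpos : ∀ᵐ x ∂μ, 0 < (μ.rnDeriv ρ x).toReal := by
    filter_upwards [Measure.rnDeriv_pos hμρ, hμρ.ae_le (Measure.rnDeriv_lt_top μ ρ)]
      with x h_pos h_lt_top
    exact ENNReal.toReal_pos h_pos.ne' h_lt_top.ne
  filter_upwards [hμρ.ae_le (Measure.rnDeriv_mul_rnDeriv (κ := ρ) hμν), hpos] with x hmul hx
  simp only [llr_def]
  rw [← hmul, Pi.mul_apply, ENNReal.toReal_mul] at hx ⊢
  exact Real.log_mul (left_ne_zero_of_mul hx.ne') (right_ne_zero_of_mul hx.ne')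

lemma integral_log_rnDeriv_le_integral_llr [IsProbabilityMeasure μ] [IsProbabilityMeasure ν]
    [IsProbabilityMeasure ρ] (hμν : μ ≪ ν) (hμρ : μ ≪ ρ) (h_int : Integrable (llr μ ρ) μ) :
    ∫ x, Real.log (ν.rnDeriv ρ x).toReal ∂μ ≤ ∫ x, llr μ ρ x ∂μ := by
  by_cases h_log : Integrable (fun x ↦ Real.log (ν.rnDeriv ρ x).toReal) μ
  · have h_chain := llr_ae_eq_llr_add_log_rnDeriv hμν hμρ
    have h_int_μν : Integrable (llr μ ν) μ :=
      (h_int.sub h_log).congr (by filter_upwards [h_chain] with x hx; simp [hx])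
    rw [integral_congr_ae h_chain, integral_add h_int_μν h_log]
    linarith [integral_llr_nonneg hμν]
  · rw [integral_undef h_log]
    exact integral_llr_nonneg hμρ

end LogLikelihoodRatio

section CompProd

variable {α β : Type*} [MeasurableSpace α] [MeasurableSpace β]

/- The fibrewise equality only passes to `m ⊗ₘ κ` on a measurable set, hence the detour through
measurable modifications of `f` and `g`. -/
lemma ae_eq_compProd_of_ae_ae_eq {γ : Type*} [TopologicalSpace γ]
    [TopologicalSpace.MetrizableSpace γ] {m : Measure α} [SFinite m] {κ : Kernel α β}
    [IsSFiniteKernel κ] {f g : α × β → γ} (hf : AEStronglyMeasurable f (m ⊗ₘ κ))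
    (hg : AEStronglyMeasurable g (m ⊗ₘ κ)) (h : ∀ᵐ a ∂m, ∀ᵐ b ∂κ a, f (a, b) = g (a, b)) :
    f =ᵐ[m ⊗ₘ κ] g := by
  obtain ⟨f₀, hf₀, hff₀⟩ := hf
  obtain ⟨g₀, hg₀, hgg₀⟩ := hg
  have h₀ : f₀ =ᵐ[m ⊗ₘ κ] g₀ := by
    refine Measure.ae_compProd_of_ae_ae (hf₀.measurableSet_eq_fun hg₀) ?_
    filter_upwards [h, Measure.ae_ae_of_ae_compProd hff₀, Measure.ae_ae_of_ae_compProd hgg₀]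
      with a ha hfa hga
    filter_upwards [ha, hfa, hga] with b hb hfb hgb
    rw [← hfb, ← hgb, hb]
  exact hff₀.trans (h₀.trans hgg₀.symm)

lemma eq_map_swap_compProd_snd {μ : Measure (α × β)} [IsFiniteMeasure μ] {κ : Kernel β α}
    [IsSFiniteKernel κ]
    (hκ : ∀ (A : Set α) (B : Set β), MeasurableSet A → MeasurableSet B →
      μ (A ×ˢ B) = ∫⁻ b in B, κ b A ∂μ.snd) :
    μ = (μ.snd ⊗ₘ κ).map Prod.swap := by
  have h_rect : ∀ A B, MeasurableSet A → MeasurableSet B →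
      μ (A ×ˢ B) = (μ.snd ⊗ₘ κ).map Prod.swap (A ×ˢ B) := by
    intro A B hA hB
    rw [hκ A B hA hB, Measure.map_apply measurable_swap (hA.prod hB), preimage_swap_prod,
      Measure.compProd_apply_prod hB hA]
  refine ext_of_generate_finite _ generateFrom_prod.symm isPiSystem_prod ?_ ?_
  · rintro _ ⟨A, hA, B, hB, rfl⟩
    exact h_rect A B hA hB
  · simpa using h_rect univ univ .univ .univ

lemma rnDeriv_compProd_ae_eq_kernel_rnDeriv [MeasurableSpace.CountableOrCountablyGenerated α β]
    {m : Measure α} [IsFiniteMeasure m] {κ η : Kernel α β} [IsFiniteKernel κ] [IsFiniteKernel η]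
    (h : ∀ᵐ a ∂m, κ a ≪ η a) :
    (m ⊗ₘ κ).rnDeriv (m ⊗ₘ η) =ᵐ[m ⊗ₘ η] fun p ↦ κ.rnDeriv η p.1 p.2 := by
  have h_eq : m ⊗ₘ κ = (m ⊗ₘ η).withDensity fun p ↦ κ.rnDeriv η p.1 p.2 := by
    rw [← Measure.compProd_withDensity (Kernel.measurable_rnDeriv κ η)]
    exact Measure.compProd_congr (h.mono fun a ha ↦ (Kernel.withDensity_rnDeriv_eq ha).symm)
  rw [h_eq]
  exact Measure.rnDeriv_withDensity _ ((Kernel.measurable_rnDeriv κ η).comp measurable_id)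

lemma rnDeriv_map_swap_compProd_ae_eq [MeasurableSpace.CountableOrCountablyGenerated β α]
    {m : Measure β} [IsFiniteMeasure m] {ρ : Measure α} [IsFiniteMeasure ρ] {q : Kernel β α}
    [IsFiniteKernel q] (h : ∀ᵐ b ∂m, q b ≪ ρ) :
    ((m ⊗ₘ q).map Prod.swap).rnDeriv (ρ.prod m)
      =ᵐ[ρ.prod m] fun z ↦ q.rnDeriv (Kernel.const β ρ) z.2 z.1 := by
  have hswap : MeasurableEmbedding (Prod.swap : β × α → α × β) :=
    MeasurableEquiv.prodComm.measurableEmbedding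
  rw [← Measure.prod_swap, ← Measure.compProd_const, Filter.EventuallyEq, hswap.ae_map_iff]
  filter_upwards [hswap.rnDeriv_map (m ⊗ₘ q) (m ⊗ₘ Kernel.const β ρ),
    rnDeriv_compProd_ae_eq_kernel_rnDeriv (h.mono fun b hb ↦ by simpa using hb)]
    with x h_map h_compProd
  rw [h_map, h_compProd, Prod.fst_swap, Prod.snd_swap]

end CompProd

theorem stmt_6_general {𝒮 ℋ : Type*} [MeasurableSpace 𝒮] [MeasurableSpace ℋ]
    [StandardBorelSpace 𝒮]
    (μ : Measure (𝒮 × ℋ)) [IsProbabilityMeasure μ]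
    (κ : Kernel ℋ 𝒮) [IsMarkovKernel κ] (q : Kernel ℋ 𝒮) [IsMarkovKernel q]
    (hκ : ∀ (A : Set 𝒮) (B : Set ℋ), MeasurableSet A → MeasurableSet B →
      μ (A ×ˢ B) = ∫⁻ h in B, κ h A ∂μ.snd)
    (n : ℕ)
    (hac : μ ≪ μ.fst.prod μ.snd)
    (hIint : Integrable (fun z => Real.log ((μ.rnDeriv (μ.fst.prod μ.snd)) z).toReal) μ)
    (hqκ : ∀ᵐ h ∂μ.snd, q h ≪ κ h ∧ κ h ≪ q h ∧ κ h ≪ μ.fst)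
    (G : 𝒮 × ℋ → ℝ)
    (hG : ∀ sh, G sh = (1 / (n : ℝ)) * Real.log (((q sh.2).rnDeriv μ.fst sh.1).toReal))
    (hGint : Integrable G μ) :
    ∫ sh, G sh ∂μ ≤ (∫ z, Real.log ((μ.rnDeriv (μ.fst.prod μ.snd)) z).toReal ∂μ) / n := by
  set ν := (μ.snd ⊗ₘ q).map Prod.swap
  -- a jointly measurable version of `(h, s) ↦ dq(h)/dμ_𝒮 (s)`
  set dq := q.rnDeriv (Kernel.const ℋ μ.fst)
  have hswap : MeasurableEmbedding (Prod.swap : ℋ × 𝒮 → 𝒮 × ℋ) :=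
    MeasurableEquiv.prodComm.measurableEmbedding
  have : IsProbabilityMeasure ν := Measure.isProbabilityMeasure_map hswap.measurable.aemeasurable
  have hμ : μ = (μ.snd ⊗ₘ κ).map Prod.swap := eq_map_swap_compProd_snd hκ
  have hμν : μ ≪ ν := hμ ▸
    (Measure.AbsolutelyContinuous.compProd_right (hqκ.mono fun _ h ↦ h.2.1)).map measurable_swap
  have hdens : ν.rnDeriv (μ.fst.prod μ.snd) =ᵐ[μ] fun z ↦ dq z.2 z.1 :=
    hac.ae_le (rnDeriv_map_swap_compProd_ae_eq (hqκ.mono fun _ h ↦ h.1.trans h.2.2))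
  have hG_ae : G =ᵐ[μ] fun z ↦ 1 / (n : ℝ) * Real.log (dq z.2 z.1).toReal := by
    have hG_meas : AEStronglyMeasurable (fun x ↦ G x.swap) (μ.snd ⊗ₘ κ) :=
      (hμ ▸ hGint.aestronglyMeasurable).comp_measurable measurable_swap
    rw [hμ, Filter.EventuallyEq, hswap.ae_map_iff]
    refine ae_eq_compProd_of_ae_ae_eq hG_meas
      ((Kernel.measurable_rnDeriv q _).ennreal_toReal.log.const_mul _).aestronglyMeasurable ?_
    filter_upwards [hqκ] with h hh
    have h_fiber : dq h =ᵐ[μ.fst] (q h).rnDeriv μ.fst := Kernel.rnDeriv_eq_rnDeriv_measure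
    filter_upwards [hh.2.2.ae_le h_fiber] with s hs
    rw [Prod.swap_prod_mk, hG, hs]
  calc ∫ z, G z ∂μ
      = 1 / n * ∫ z, Real.log (ν.rnDeriv (μ.fst.prod μ.snd) z).toReal ∂μ := by
        rw [← integral_const_mul]
        refine integral_congr_ae (hG_ae.trans ?_)
        filter_upwards [hdens] with z hz
        rw [hz]
    _ ≤ 1 / n * ∫ z, llr μ (μ.fst.prod μ.snd) z ∂μ :=
        mul_le_mul_of_nonneg_left (integral_log_rnDeriv_le_integral_llr hμν hac hIint)
          (by positivity)
    _ = _ := one_div_mul_eq_div _ _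

/-- **Lemma 3 (lem:esperanzaesinformacion)**: the expectation of the PACMAN generalization gap
is bounded by the mutual information `KL(μ ‖ μ_𝒮 ⊗ μ_ℋ)` divided by `n`. -/
theorem stmt_6 {𝒮 ℋ : Type*} [MeasurableSpace 𝒮] [MeasurableSpace ℋ]
    [StandardBorelSpace 𝒮] [StandardBorelSpace ℋ]
    (μ : Measure (𝒮 × ℋ)) [IsProbabilityMeasure μ]
    (κ : Kernel ℋ 𝒮) [IsMarkovKernel κ] (q : Kernel ℋ 𝒮) [IsMarkovKernel q]
    (hκ : ∀ (A : Set 𝒮) (B : Set ℋ), MeasurableSet A → MeasurableSet B →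
      μ (A ×ˢ B) = ∫⁻ h in B, κ h A ∂μ.snd)
    (n : ℕ) (hn : 1 ≤ n)
    (hac : μ ≪ μ.fst.prod μ.snd)
    (hIint : Integrable (fun z => Real.log ((μ.rnDeriv (μ.fst.prod μ.snd)) z).toReal) μ)
    (hqκ : ∀ᵐ h ∂μ.snd, q h ≪ κ h ∧ κ h ≪ q h ∧ κ h ≪ μ.fst)
    (G : 𝒮 × ℋ → ℝ)
    (hG : ∀ sh, G sh = (1 / (n : ℝ)) * Real.log (((q sh.2).rnDeriv μ.fst sh.1).toReal))
    (hGint : Integrable G μ) :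
    ∫ sh, G sh ∂μ ≤ (∫ z, Real.log ((μ.rnDeriv (μ.fst.prod μ.snd)) z).toReal ∂μ) / n :=
  stmt_6_general μ κ q hκ n hac hIint hqκ G hG hGint
end

section
/- Let δ ∈ (0,1] and σ > 0. Assume: (i) μ ≪ μ_𝒮 ⊗ μ_ℋ with I := KL(μ ‖ μ_𝒮 ⊗ μ_ℋ) < ∞; (ii) for μ_ℋ-a.e. h the measures q(h) and κ(h) are mutually absolutely continuous with κ(h) ≪ μ_𝒮; (iii) the function G(s,h) = (1/n)·log((dq(h)/dμ_𝒮)(s)) is μ-integrable; and (iv) for every λ > 0, log ∫ exp(λ·n·G) dμ ≤ λ·n·∫ G dμ + λ²σ²/2 (i.e., n·G is σ-subgaussian around its mean). Then μ({(s,h) : G(s,h) > I/n + (1/n)·√(2σ²·log(1/δ))}) ≤ δ. -/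
/-!
Disintegrating `μ` as `μ_ℋ ⊗ κ`, the cross entropy `∫ log (dq(h)/dμ_𝒮)(s) dμ = n 𝔼[G]` differs
from the mutual information `I = KL(μ ‖ μ_𝒮 ⊗ μ_ℋ)` by `KL(μ_ℋ ⊗ κ ‖ μ_ℋ ⊗ q) ≥ 0`: this is the
chain rule for log-likelihood ratios through the intermediate measure `μ_ℋ ⊗ q` together with
Gibbs' inequality. Hence `n 𝔼[G] ≤ I`, and the Chernoff bound for the subgaussian variable `n G`
at the optimal exponent `λ = c / σ²`, `c = √(2σ² log(1/δ))`, bounds the probability that `n G`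
exceeds `I + c` by `exp (-c² / (2σ²)) = δ`.
-/

open MeasureTheory ProbabilityTheory InformationTheory Set
open scoped ENNReal

section LogLikelihoodRatio

variable {α : Type*} {mα : MeasurableSpace α}

lemma llr_ae_eq_llr_add_llr {ρ ν P : Measure α} [SigmaFinite ρ] [SigmaFinite ν] [SigmaFinite P]
    (hρν : ρ ≪ ν) (hνP : ν ≪ P) : llr ρ P =ᵐ[ρ] llr ρ ν + llr ν P := by
  filter_upwards [(hρν.trans hνP).ae_le (Measure.rnDeriv_mul_rnDeriv (κ := P) hρν),
    Measure.rnDeriv_pos hρν, hρν.ae_le (Measure.rnDeriv_lt_top ρ ν),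
    hρν.ae_le (Measure.rnDeriv_pos hνP), (hρν.trans hνP).ae_le (Measure.rnDeriv_lt_top ν P)]
    with x hmul hρν_pos hρν_lt hνP_pos hνP_lt
  simp only [llr, Pi.add_apply]
  rw [← hmul, Pi.mul_apply, ENNReal.toReal_mul, Real.log_mul
    (ENNReal.toReal_pos hρν_pos.ne' hρν_lt.ne).ne' (ENNReal.toReal_pos hνP_pos.ne' hνP_lt.ne).ne']

lemma integral_llr_le_integral_llr {ρ ν P : Measure α} [IsProbabilityMeasure ρ]
    [IsProbabilityMeasure ν] [SigmaFinite P] (hρν : ρ ≪ ν) (hνP : ν ≪ P)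
    (hρP : Integrable (llr ρ P) ρ) (hνP_int : Integrable (llr ν P) ρ) :
    ∫ x, llr ν P x ∂ρ ≤ ∫ x, llr ρ P x ∂ρ := by
  have hchain := llr_ae_eq_llr_add_llr hρν hνP
  have hρν_int : Integrable (llr ρ ν) ρ := by
    refine (hρP.sub hνP_int).congr ?_
    filter_upwards [hchain] with x hx
    simp [hx]
  have hgibbs := integral_llr_add_sub_measure_univ_nonneg hρν hρν_int
  rw [probReal_univ, probReal_univ] at hgibbs
  rw [integral_congr_ae hchain, integral_add' hρν_int hνP_int]
  linarith

lemma klDiv_map_swap {β : Type*} {mβ : MeasurableSpace β} (μ ν : Measure (α × β))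
    [IsFiniteMeasure μ] [IsFiniteMeasure ν] :
    klDiv (μ.map Prod.swap) (ν.map Prod.swap) = klDiv μ ν := by
  refine le_antisymm (klDiv_map_le μ ν measurable_swap) ?_
  calc klDiv μ ν
      = klDiv ((μ.map Prod.swap).map Prod.swap) ((ν.map Prod.swap).map Prod.swap) := by
        simp [Measure.map_map measurable_swap measurable_swap]
    _ ≤ klDiv (μ.map Prod.swap) (ν.map Prod.swap) := klDiv_map_le _ _ measurable_swap

end LogLikelihoodRatio

section CompProd

variable {α β : Type*} {mα : MeasurableSpace α} {mβ : MeasurableSpace β}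

lemma ae_eq_compProd_of_ae_ae {γ : Type*} {mγ : MeasurableSpace γ} [MeasurableEq γ]
    {μ : Measure α} [SFinite μ] {κ : Kernel α β} [IsSFiniteKernel κ] {f g : α × β → γ}
    (hf : AEMeasurable f (μ ⊗ₘ κ)) (hg : Measurable g)
    (h : ∀ᵐ a ∂μ, ∀ᵐ b ∂κ a, f (a, b) = g (a, b)) : f =ᵐ[μ ⊗ₘ κ] g := by
  refine hf.ae_eq_mk.trans
    (Measure.ae_compProd_of_ae_ae (measurableSet_eq_fun hf.measurable_mk hg) ?_)
  filter_upwards [h, Measure.ae_ae_of_ae_compProd hf.ae_eq_mk] with a hfg hmk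
  filter_upwards [hfg, hmk] with b hfg hmk
  exact hmk.symm.trans hfg

lemma map_swap_eq_compProd (μ : Measure (β × α)) [IsFiniteMeasure μ] (κ : Kernel α β)
    [IsSFiniteKernel κ]
    (hκ : ∀ (A : Set β) (B : Set α), MeasurableSet A → MeasurableSet B →
      μ (A ×ˢ B) = ∫⁻ a in B, κ a A ∂μ.snd) :
    μ.map Prod.swap = μ.snd ⊗ₘ κ := by
  have hrect : ∀ B A, MeasurableSet B → MeasurableSet A →
      μ.map Prod.swap (B ×ˢ A) = (μ.snd ⊗ₘ κ) (B ×ˢ A) := fun B A hB hA => by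
    rw [Measure.map_apply measurable_swap (hB.prod hA), preimage_swap_prod, hκ A B hA hB,
      Measure.compProd_apply_prod hB hA]
  refine ext_of_generate_finite _ generateFrom_prod.symm isPiSystem_prod ?_ ?_
  · rintro _ ⟨B, hB, A, hA, rfl⟩
    exact hrect B A hB hA
  · simpa using hrect univ univ .univ .univ

variable [MeasurableSpace.CountableOrCountablyGenerated α β]

lemma ae_ae_rnDeriv_compProd_prod_eq (ρ : Measure α) [IsFiniteMeasure ρ] (m : Measure β)
    [IsFiniteMeasure m] (q : Kernel α β) [IsFiniteKernel q] (hqm : ∀ᵐ a ∂ρ, q a ≪ m) :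
    ∀ᵐ a ∂ρ, ∀ᵐ b ∂m, (ρ ⊗ₘ q).rnDeriv (ρ.prod m) (a, b) = (q a).rnDeriv m b := by
  have hf := Kernel.measurable_rnDeriv q (Kernel.const α m)
  have hq : ρ ⊗ₘ q = (ρ.prod m).withDensity fun p => q.rnDeriv (Kernel.const α m) p.1 p.2 := by
    rw [← Measure.compProd_const, ← Measure.compProd_withDensity hf]
    refine Measure.compProd_congr ?_
    filter_upwards [hqm] with a ha
    exact (Kernel.withDensity_rnDeriv_eq (by simpa using ha)).symm
  -- `Kernel.rnDeriv` is a jointly measurable version of `(a, b) ↦ ∂(q a)/∂m b`.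
  have h : (ρ ⊗ₘ q).rnDeriv (ρ.prod m) =ᵐ[ρ ⊗ₘ Kernel.const α m]
      fun p => q.rnDeriv (Kernel.const α m) p.1 p.2 := by
    rw [Measure.compProd_const, hq]
    exact Measure.rnDeriv_withDensity _ hf
  filter_upwards [Measure.ae_ae_of_ae_compProd h] with a ha
  filter_upwards [ha, Kernel.rnDeriv_eq_rnDeriv_measure (κ := q) (η := Kernel.const α m) (a := a)]
    with b hb hb'
  simpa [hb] using hb'

lemma integral_log_rnDeriv_le_toReal_klDiv (ρ : Measure α) [IsProbabilityMeasure ρ]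
    (m : Measure β) [IsProbabilityMeasure m] (κ q : Kernel α β) [IsMarkovKernel κ]
    [IsMarkovKernel q] (hκq : ∀ᵐ a ∂ρ, κ a ≪ q a) (hqm : ∀ᵐ a ∂ρ, q a ≪ m)
    (hKL : klDiv (ρ ⊗ₘ κ) (ρ.prod m) ≠ ∞)
    (hint : Integrable (fun p => Real.log ((q p.1).rnDeriv m p.2).toReal) (ρ ⊗ₘ κ)) :
    ∫ p, Real.log ((q p.1).rnDeriv m p.2).toReal ∂(ρ ⊗ₘ κ) ≤
      (klDiv (ρ ⊗ₘ κ) (ρ.prod m)).toReal := by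
  obtain ⟨hκm, hKL_int⟩ := klDiv_ne_top_iff.1 hKL
  have hκq' : ρ ⊗ₘ κ ≪ ρ ⊗ₘ q := Measure.AbsolutelyContinuous.compProd_right hκq
  have hqm' : ρ ⊗ₘ q ≪ ρ.prod m := by
    rw [← Measure.compProd_const]
    exact Measure.AbsolutelyContinuous.compProd_right (by simpa using hqm)
  have hllr : (fun p => Real.log ((q p.1).rnDeriv m p.2).toReal)
      =ᵐ[ρ ⊗ₘ κ] llr (ρ ⊗ₘ q) (ρ.prod m) := by
    refine ae_eq_compProd_of_ae_ae hint.aemeasurable (measurable_llr _ _) ?_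
    filter_upwards [ae_ae_rnDeriv_compProd_prod_eq ρ m q hqm, hκq, hqm] with a ha hκa hqa
    filter_upwards [(hκa.trans hqa).ae_le ha] with b hb
    rw [llr, hb]
  rw [toReal_klDiv_of_measure_eq hκm (by simp), integral_congr_ae hllr]
  exact integral_llr_le_integral_llr hκq' hqm' hKL_int (hint.congr hllr)

lemma integral_log_rnDeriv_le_integral_llr_fst_prod_snd (μ : Measure (β × α))
    [IsProbabilityMeasure μ] (κ q : Kernel α β) [IsMarkovKernel κ] [IsMarkovKernel q]
    (hswap : μ.map Prod.swap = μ.snd ⊗ₘ κ)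
    (hκq : ∀ᵐ a ∂μ.snd, κ a ≪ q a) (hqm : ∀ᵐ a ∂μ.snd, q a ≪ μ.fst)
    (hac : μ ≪ μ.fst.prod μ.snd) (hint_llr : Integrable (llr μ (μ.fst.prod μ.snd)) μ)
    (hint : Integrable (fun z => Real.log ((q z.2).rnDeriv μ.fst z.1).toReal) μ) :
    ∫ z, Real.log ((q z.2).rnDeriv μ.fst z.1).toReal ∂μ ≤ ∫ z, llr μ (μ.fst.prod μ.snd) z ∂μ := by
  have hswap_emb : MeasurableEmbedding (Prod.swap : β × α → α × β) :=
    MeasurableEquiv.prodComm.measurableEmbedding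
  have hKL : klDiv (μ.snd ⊗ₘ κ) (μ.snd.prod μ.fst) = klDiv μ (μ.fst.prod μ.snd) := by
    rw [← hswap, ← Measure.prod_swap (μ := μ.fst), klDiv_map_swap]
  calc ∫ z, Real.log ((q z.2).rnDeriv μ.fst z.1).toReal ∂μ
      = ∫ p, Real.log ((q p.1).rnDeriv μ.fst p.2).toReal ∂(μ.snd ⊗ₘ κ) := by
        rw [← hswap, hswap_emb.integral_map]
        rfl
    _ ≤ (klDiv (μ.snd ⊗ₘ κ) (μ.snd.prod μ.fst)).toReal := by
        refine integral_log_rnDeriv_le_toReal_klDiv μ.snd μ.fst κ q hκq hqm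
          (hKL ▸ klDiv_ne_top hac hint_llr) ?_
        rwa [← hswap, hswap_emb.integrable_map_iff]
    _ = ∫ z, llr μ (μ.fst.prod μ.snd) z ∂μ := by
        rw [hKL, toReal_klDiv_of_measure_eq hac (by simp)]

end CompProd

lemma measure_add_sqrt_lt_le_of_cgf_le {Ω : Type*} {mΩ : MeasurableSpace Ω} {μ : Measure Ω}
    [IsProbabilityMeasure μ] {X : Ω → ℝ} {b σ δ : ℝ} (hσ : 0 < σ) (hδ : 0 < δ)
    (hX : ∀ t, 0 < t →
      Integrable (fun ω => Real.exp (t * X ω)) μ ∧ cgf X μ t ≤ t * b + t ^ 2 * σ ^ 2 / 2) :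
    μ {ω | b + √(2 * σ ^ 2 * Real.log (1 / δ)) < X ω} ≤ ENNReal.ofReal δ := by
  rcases le_or_gt 1 δ with hδ1 | hδ1
  · exact prob_le_one.trans (ENNReal.one_le_ofReal.2 hδ1)
  set L := Real.log (1 / δ) with hL_def
  have hL : 0 < L := Real.log_pos ((one_lt_div hδ).2 hδ1)
  set c := √(2 * σ ^ 2 * L)
  have hc : c ^ 2 = 2 * σ ^ 2 * L := Real.sq_sqrt (by positivity)
  -- the minimiser of `t ↦ -t * c + t ^ 2 * σ ^ 2 / 2`
  set t := c / σ ^ 2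
  have ht : 0 < t := by positivity
  obtain ⟨hint, hcgf⟩ := hX t ht
  have htc : t * c = 2 * L := by
    rw [div_mul_eq_mul_div, ← sq, hc]
    field_simp
  have htσ : t ^ 2 * σ ^ 2 / 2 = L := by
    rw [div_pow, hc]
    field_simp
  have hlogδ : Real.log δ = -L := by
    rw [hL_def, one_div, Real.log_inv, neg_neg]
  have hexp : -t * (b + c) + cgf X μ t ≤ Real.log δ := by
    linarith
  calc μ {ω | b + c < X ω} ≤ μ {ω | b + c ≤ X ω} := measure_mono fun _ (h : b + c < _) => h.le
    _ = ENNReal.ofReal (μ.real {ω | b + c ≤ X ω}) := (ofReal_measureReal (measure_ne_top _ _)).symm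
    _ ≤ ENNReal.ofReal (Real.exp (Real.log δ)) := ENNReal.ofReal_le_ofReal
        ((measure_ge_le_exp_cgf _ ht.le hint).trans (Real.exp_le_exp.2 hexp))
    _ = ENNReal.ofReal δ := by rw [Real.exp_log hδ]

theorem stmt_9_general {𝒮 ℋ : Type*} [MeasurableSpace 𝒮] [MeasurableSpace ℋ]
    [StandardBorelSpace 𝒮]
    (μ : Measure (𝒮 × ℋ)) [IsProbabilityMeasure μ]
    (κ : Kernel ℋ 𝒮) [IsMarkovKernel κ] (q : Kernel ℋ 𝒮) [IsMarkovKernel q]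
    (hκ : ∀ (A : Set 𝒮) (B : Set ℋ), MeasurableSet A → MeasurableSet B →
      μ (A ×ˢ B) = ∫⁻ h in B, κ h A ∂μ.snd)
    (n : ℕ) (hn : 1 ≤ n) (δ σ : ℝ) (hδ : δ ∈ Ioc (0 : ℝ) 1) (hσ : 0 < σ)
    (hac : μ ≪ μ.fst.prod μ.snd)
    (hIint : Integrable (fun z => Real.log ((μ.rnDeriv (μ.fst.prod μ.snd)) z).toReal) μ)
    (I : ℝ) (hI : I = ∫ z, Real.log ((μ.rnDeriv (μ.fst.prod μ.snd)) z).toReal ∂μ)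
    (hqκ : ∀ᵐ h ∂μ.snd, q h ≪ κ h ∧ κ h ≪ q h ∧ κ h ≪ μ.fst)
    (G : 𝒮 × ℋ → ℝ)
    (hG : ∀ sh, G sh = (1 / (n : ℝ)) * Real.log (((q sh.2).rnDeriv μ.fst sh.1).toReal))
    (hGint : Integrable G μ)
    (hsub : ∀ l : ℝ, 0 < l →
      Integrable (fun sh => Real.exp (l * n * G sh)) μ ∧
      Real.log (∫ sh, Real.exp (l * n * G sh) ∂μ)
        ≤ l * n * (∫ sh, G sh ∂μ) + l ^ 2 * σ ^ 2 / 2) :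
    μ {sh : 𝒮 × ℋ |
        G sh > I / n + (1 / (n : ℝ)) * Real.sqrt (2 * σ ^ 2 * Real.log (1 / δ))} ≤
      ENNReal.ofReal δ := by
  have hn0 : (0 : ℝ) < n := by exact_mod_cast hn
  have hnG : ∀ sh, n * G sh = Real.log ((q sh.2).rnDeriv μ.fst sh.1).toReal := fun sh => by
    rw [hG]
    field_simp
  have hmean : n * ∫ sh, G sh ∂μ ≤ I := by
    rw [← integral_const_mul, integral_congr_ae (ae_of_all _ hnG), hI]
    exact integral_log_rnDeriv_le_integral_llr_fst_prod_snd μ κ q (map_swap_eq_compProd μ κ hκ)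
      (hqκ.mono fun _ h => h.2.1) (hqκ.mono fun _ h => h.1.trans h.2.2) hac hIint
      ((hGint.const_mul (n : ℝ)).congr (ae_of_all _ hnG))
  set c := √(2 * σ ^ 2 * Real.log (1 / δ))
  have hset : {sh : 𝒮 × ℋ | G sh > I / n + 1 / n * c} = {sh | I + c < n * G sh} := by
    ext sh
    rw [mem_ofPred_eq, mem_ofPred_eq, gt_iff_lt,
      show I / n + 1 / n * c = (I + c) / n by ring, div_lt_iff₀ hn0, mul_comm]
  rw [hset]
  refine measure_add_sqrt_lt_le_of_cgf_le hσ hδ.1 fun t ht => ?_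
  obtain ⟨hint_exp, hlog⟩ := hsub t ht
  simp only [← mul_assoc]
  refine ⟨hint_exp, ?_⟩
  calc cgf (fun sh => n * G sh) μ t = Real.log (∫ sh, Real.exp (t * n * G sh) ∂μ) := by
        simp only [cgf, mgf, mul_assoc]
    _ ≤ t * n * (∫ sh, G sh ∂μ) + t ^ 2 * σ ^ 2 / 2 := hlog
    _ ≤ t * I + t ^ 2 * σ ^ 2 / 2 := by
        rw [mul_assoc]
        gcongr

/-- **Example 2 (subgaussian hypothesis on the generalization metric)**: if `n·G` is
`σ`-subgaussian around its mean then the PACMAN generalization gap `G` is at most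
`I(S;𝐡)/n + (1/n)·√(2σ²·log(1/δ))` with probability at least `1 - δ`. -/
theorem stmt_9 {𝒮 ℋ : Type*} [MeasurableSpace 𝒮] [MeasurableSpace ℋ]
    [StandardBorelSpace 𝒮] [StandardBorelSpace ℋ]
    (μ : Measure (𝒮 × ℋ)) [IsProbabilityMeasure μ]
    (κ : Kernel ℋ 𝒮) [IsMarkovKernel κ] (q : Kernel ℋ 𝒮) [IsMarkovKernel q]
    (hκ : ∀ (A : Set 𝒮) (B : Set ℋ), MeasurableSet A → MeasurableSet B →
      μ (A ×ˢ B) = ∫⁻ h in B, κ h A ∂μ.snd)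
    (n : ℕ) (hn : 1 ≤ n) (δ σ : ℝ) (hδ : δ ∈ Ioc (0 : ℝ) 1) (hσ : 0 < σ)
    (hac : μ ≪ μ.fst.prod μ.snd)
    (hIint : Integrable (fun z => Real.log ((μ.rnDeriv (μ.fst.prod μ.snd)) z).toReal) μ)
    (I : ℝ) (hI : I = ∫ z, Real.log ((μ.rnDeriv (μ.fst.prod μ.snd)) z).toReal ∂μ)
    (hqκ : ∀ᵐ h ∂μ.snd, q h ≪ κ h ∧ κ h ≪ q h ∧ κ h ≪ μ.fst)
    (G : 𝒮 × ℋ → ℝ)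
    (hG : ∀ sh, G sh = (1 / (n : ℝ)) * Real.log (((q sh.2).rnDeriv μ.fst sh.1).toReal))
    (hGint : Integrable G μ)
    (hsub : ∀ l : ℝ, 0 < l →
      Integrable (fun sh => Real.exp (l * n * G sh)) μ ∧
      Real.log (∫ sh, Real.exp (l * n * G sh) ∂μ)
        ≤ l * n * (∫ sh, G sh ∂μ) + l ^ 2 * σ ^ 2 / 2) :
    μ {sh : 𝒮 × ℋ |
        G sh > I / n + (1 / (n : ℝ)) * Real.sqrt (2 * σ ^ 2 * Real.log (1 / δ))} ≤
      ENNReal.ofReal δ :=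
  stmt_9_general μ κ q hκ n hn δ σ hδ hσ hac hIint I hI hqκ G hG hGint hsub
end

section
/- The soft and hard risks satisfy the two-sided bound (1/2)·R*_p(H) ≤ R_p(𝐡) ≤ 1 − c_𝐡 + R*_p(H). -/
/-!
Pointwise, with `w = 𝐡(x)` and `i = H(x)`: a coordinate `w j` with `j ≠ i` satisfies
`w j + w i ≤ 1` and `w j ≤ w i`, hence `w j ≤ 1/2`, so `1 - w j ≥ 1/2 · 𝟙[i ≠ j]`; and
`w i - w j ≤ 𝟙[i ≠ j]` because all coordinates lie in `[0, 1]`. Integrating these two bounds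
against `p` gives the lower and the upper bound.
-/

open MeasureTheory

section ProbabilityVector

variable {ι : Type*} [Fintype ι] {w : ι → ℝ}

theorem le_one_of_sum_eq_one (hnn : ∀ i, 0 ≤ w i) (hsum : ∑ i, w i = 1) (i : ι) : w i ≤ 1 :=
  hsum ▸ Finset.single_le_sum (fun j _ => hnn j) (Finset.mem_univ i)

theorem add_le_one_of_ne (hnn : ∀ i, 0 ≤ w i) (hsum : ∑ i, w i = 1) {i j : ι} (hij : i ≠ j) :
    w i + w j ≤ 1 := by
  classical
  rw [← hsum, ← Finset.sum_pair hij]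
  exact Finset.sum_le_sum_of_subset_of_nonneg (Finset.subset_univ _) fun k _ _ => hnn k

theorem le_half_of_ne_of_forall_le (hnn : ∀ i, 0 ≤ w i) (hsum : ∑ i, w i = 1) {i j : ι}
    (hmax : ∀ k, w k ≤ w i) (hij : i ≠ j) : w j ≤ 1 / 2 := by
  linarith [add_le_one_of_ne hnn hsum hij, hmax j]

theorem half_mul_indicator_ne_le_one_sub (hnn : ∀ i, 0 ≤ w i) (hsum : ∑ i, w i = 1) {i : ι}
    (hmax : ∀ k, w k ≤ w i) (j : ι) : 1 / 2 * {k | i ≠ k}.indicator 1 j ≤ 1 - w j := by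
  by_cases hij : i ≠ j
  · rw [Set.indicator_of_mem hij, Pi.one_apply]
    linarith [le_half_of_ne_of_forall_le hnn hsum hmax hij]
  · rw [Set.indicator_of_notMem hij]
    linarith [le_one_of_sum_eq_one hnn hsum j]

theorem sub_le_indicator_ne (hnn : ∀ i, 0 ≤ w i) (hsum : ∑ i, w i = 1) (i j : ι) :
    w i - w j ≤ {k | i ≠ k}.indicator 1 j := by
  by_cases hij : i ≠ j
  · rw [Set.indicator_of_mem hij, Pi.one_apply]
    linarith [le_one_of_sum_eq_one hnn hsum i, hnn j]
  · rw [Set.indicator_of_notMem hij, not_not.mp hij, sub_self]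

theorem integrable_apply_of_sum_eq_one {α : Type*} [MeasurableSpace α] {μ : Measure α}
    [IsFiniteMeasure μ] {v : α → ι → ℝ} {f : α → ι} (hm : Measurable fun a => v a (f a))
    (hnn : ∀ a i, 0 ≤ v a i) (hsum : ∀ a, ∑ i, v a i = 1) :
    Integrable (fun a => v a (f a)) μ :=
  .of_bound hm.aestronglyMeasurable 1 <| .of_forall fun a => by
    rw [Real.norm_of_nonneg (hnn a _)]
    exact le_one_of_sum_eq_one (hnn a) (hsum a) _

end ProbabilityVector

theorem stmt_10_general {𝒳 𝒴 : Type*} [MeasurableSpace 𝒳] [MeasurableSpace 𝒴]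
    [Fintype 𝒴] [DiscreteMeasurableSpace 𝒴]
    (p : Measure (𝒳 × 𝒴)) [IsProbabilityMeasure p]
    (hs : 𝒳 → 𝒴 → ℝ) (hmeas : ∀ y, Measurable fun x => hs x y)
    (hnn : ∀ x y, 0 ≤ hs x y) (hsum : ∀ x, ∑ y, hs x y = 1)
    (H : 𝒳 → 𝒴) (Hmeas : Measurable H) (Hmax : ∀ x y, hs x y ≤ hs x (H x)) :
    (1 / 2) * (p {z : 𝒳 × 𝒴 | H z.1 ≠ z.2}).toReal ≤ 1 - ∫ z, hs z.1 z.2 ∂p ∧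
    1 - ∫ z, hs z.1 z.2 ∂p
      ≤ 1 - (∫ z, hs z.1 (H z.1) ∂p) + (p {z : 𝒳 × 𝒴 | H z.1 ≠ z.2}).toReal := by
  set A := {z : 𝒳 × 𝒴 | H z.1 ≠ z.2}
  have hA : MeasurableSet A :=
    (measurableSet_eq_fun (Hmeas.comp measurable_fst) measurable_snd).compl
  have hsoft : Measurable fun z : 𝒳 × 𝒴 => hs z.1 z.2 := measurable_from_prod_countable_left hmeas
  have hsoftInt : Integrable (fun z : 𝒳 × 𝒴 => hs z.1 z.2) p :=
    integrable_apply_of_sum_eq_one hsoft (fun z => hnn z.1) (fun z => hsum z.1)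
  have hconfInt : Integrable (fun z : 𝒳 × 𝒴 => hs z.1 (H z.1)) p :=
    integrable_apply_of_sum_eq_one
      (hsoft.comp (measurable_fst.prodMk (Hmeas.comp measurable_fst)))
      (fun z => hnn z.1) (fun z => hsum z.1)
  have hA1 : Integrable (A.indicator (1 : 𝒳 × 𝒴 → ℝ)) p := (integrable_const 1).indicator hA
  have hhard : (p A).toReal = ∫ z, A.indicator (1 : 𝒳 × 𝒴 → ℝ) z ∂p :=
    (integral_indicator_one hA).symm
  constructor
  · calc 1 / 2 * (p A).toReal = ∫ z, 1 / 2 * A.indicator (1 : 𝒳 × 𝒴 → ℝ) z ∂p := by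
          rw [integral_const_mul, hhard]
      _ ≤ ∫ z, (1 - hs z.1 z.2) ∂p :=
          integral_mono (hA1.const_mul _) ((integrable_const 1).sub hsoftInt) fun z =>
            half_mul_indicator_ne_le_one_sub (hnn z.1) (hsum z.1) (Hmax z.1) z.2
      _ = 1 - ∫ z, hs z.1 z.2 ∂p := by
          rw [integral_sub (integrable_const 1) hsoftInt, integral_const, probReal_univ, one_smul]
  · have hconf_sub_soft : ∫ z, hs z.1 (H z.1) ∂p - ∫ z, hs z.1 z.2 ∂p ≤ (p A).toReal := by
      rw [← integral_sub hconfInt hsoftInt, hhard]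
      exact integral_mono (hconfInt.sub hsoftInt) hA1 fun z =>
        sub_le_indicator_ne (hnn z.1) (hsum z.1) (H z.1) z.2
    linarith

/-- **Theorem 7 (teo:hardsoft), main inequality**: the soft risk `R_p(hs)` and the hard risk
`R*_p(H)` satisfy `(1/2)·R*_p(H) ≤ R_p(hs) ≤ 1 − c_hs + R*_p(H)`, where `c_hs` is the expected
confidence of the decision. -/
theorem stmt_10 {𝒳 𝒴 : Type*} [MeasurableSpace 𝒳] [MeasurableSpace 𝒴]
    [Fintype 𝒴] [Nonempty 𝒴] [DiscreteMeasurableSpace 𝒴]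
    (p : Measure (𝒳 × 𝒴)) [IsProbabilityMeasure p]
    (hs : 𝒳 → 𝒴 → ℝ) (hmeas : ∀ y, Measurable fun x => hs x y)
    (hnn : ∀ x y, 0 ≤ hs x y) (hsum : ∀ x, ∑ y, hs x y = 1)
    (H : 𝒳 → 𝒴) (Hmeas : Measurable H) (Hmax : ∀ x y, hs x y ≤ hs x (H x)) :
    (1 / 2) * (p {z : 𝒳 × 𝒴 | H z.1 ≠ z.2}).toReal ≤ 1 - ∫ z, hs z.1 z.2 ∂p ∧
    1 - ∫ z, hs z.1 z.2 ∂p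
      ≤ 1 - (∫ z, hs z.1 (H z.1) ∂p) + (p {z : 𝒳 × 𝒴 | H z.1 ≠ z.2}).toReal :=
  stmt_10_general p hs hmeas hnn hsum H Hmeas Hmax
end

section
/- Let μ and ν be probability measures on a measurable space Ω with μ ≪ ν and KL(μ‖ν) = ∫ log(dμ/dν) dμ < ∞, and let E be a measurable set with 0 < ν(E) < 1. Then μ(E) ≤ (KL(μ‖ν) + 1)/(−log ν(E)). -/
/-!
Testing the Donsker–Varadhan inequality `∫ f dμ ≤ KL(μ‖ν) + log ∫ exp f dν` against
`f = c · 𝟙_E` gives `c μ(E) ≤ KL(μ‖ν) + log (1 + (e^c - 1) ν(E))`. The choice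
`c = -log ν(E)` makes the argument of the logarithm `2 - ν(E)`, whose logarithm is at most `1`.
-/

open MeasureTheory Real

lemma Real.exp_indicator_const {Ω : Type*} (E : Set Ω) (c : ℝ) (x : Ω) :
    exp (E.indicator (fun _ ↦ c) x) = 1 + E.indicator (fun _ ↦ exp c - 1) x := by
  by_cases hx : x ∈ E <;> simp [hx]

namespace MeasureTheory

variable {Ω : Type*} [MeasurableSpace Ω] {μ ν : Measure Ω}

theorem integral_le_integral_llr_add_log_integral_exp [IsProbabilityMeasure μ] [SigmaFinite ν]
    (hμν : μ ≪ ν) (h_int : Integrable (llr μ ν) μ) {f : Ω → ℝ} (hfμ : Integrable f μ)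
    (hfν : Integrable (fun x ↦ exp (f x)) ν) :
    ∫ x, f x ∂μ ≤ ∫ x, llr μ ν x ∂μ + log (∫ x, exp (f x) ∂ν) := by
  have : NeZero ν := ⟨fun h ↦ IsProbabilityMeasure.ne_zero μ (by simpa [h] using hμν)⟩
  have : IsProbabilityMeasure (ν.tilted f) := isProbabilityMeasure_tilted hfν
  -- Gibbs' inequality for `μ` against the tilted measure `ν.tilted f ∝ e^f ν`.
  have gibbs := InformationTheory.integral_llr_add_sub_measure_univ_nonneg
    (hμν.trans (absolutelyContinuous_tilted hfν)) (integrable_llr_tilted_right hμν hfμ h_int hfν)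
  rw [integral_llr_tilted_right hμν hfμ hfν h_int] at gibbs
  simp only [probReal_univ] at gibbs
  linarith

theorem mul_measureReal_le_integral_llr_add_log [IsProbabilityMeasure μ] [IsProbabilityMeasure ν]
    (hμν : μ ≪ ν) (h_int : Integrable (llr μ ν) μ) {E : Set Ω} (hE : MeasurableSet E) (c : ℝ) :
    c * μ.real E ≤ ∫ x, llr μ ν x ∂μ + log (1 + (exp c - 1) * ν.real E) := by
  have h_exp_int : Integrable (fun x ↦ 1 + E.indicator (fun _ ↦ exp c - 1) x) ν :=
    (integrable_const _).add ((integrable_const _).indicator hE)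
  have h_exp : ∫ x, exp (E.indicator (fun _ ↦ c) x) ∂ν = 1 + (exp c - 1) * ν.real E := by
    simp_rw [exp_indicator_const]
    rw [integral_add (integrable_const _) ((integrable_const _).indicator hE),
      integral_indicator_const _ hE]
    simp [mul_comm]
  have h_dv := integral_le_integral_llr_add_log_integral_exp hμν h_int
    ((integrable_const c).indicator hE) (by simpa only [exp_indicator_const] using h_exp_int)
  rwa [integral_indicator_const _ hE, smul_eq_mul, mul_comm, h_exp] at h_dv

end MeasureTheory

/-- **Lemma 2** (Bassily et al., Lemma 9): for probability measures `μ ≪ ν` with finite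
KL divergence and any event `E` with `0 < ν(E) < 1`,
`μ(E) ≤ (KL(μ‖ν) + 1)/(−log ν(E))`. -/
theorem stmt_14 {Ω : Type*} [MeasurableSpace Ω] (μ ν : Measure Ω)
    [IsProbabilityMeasure μ] [IsProbabilityMeasure ν]
    (hac : μ ≪ ν)
    (hKLint : Integrable (fun ω => Real.log ((μ.rnDeriv ν ω).toReal)) μ)
    (E : Set Ω) (hE : MeasurableSet E) (h0 : 0 < ν E) (h1 : ν E < 1) :
    (μ E).toReal ≤
      ((∫ ω, Real.log ((μ.rnDeriv ν ω).toReal) ∂μ) + 1) / (-Real.log ((ν E).toReal)) := by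
  simp only [← measureReal_def]
  have hpos : 0 < ν.real E := ENNReal.toReal_pos h0.ne' (measure_ne_top ν E)
  have hlt : ν.real E < 1 := by
    simpa [measureReal_def] using ENNReal.toReal_strict_mono ENNReal.one_ne_top h1
  have h_bound := mul_measureReal_le_integral_llr_add_log hac hKLint hE (-log (ν.real E))
  rw [exp_neg, exp_log hpos, sub_mul, inv_mul_cancel₀ hpos.ne', one_mul] at h_bound
  have h_log : log (1 + (1 - ν.real E)) ≤ 1 := by
    linarith [log_le_sub_one_of_pos (show 0 < 1 + (1 - ν.real E) by linarith)]
  rw [le_div_iff₀ (neg_pos.2 (log_neg hpos hlt))]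
  change _ ≤ ∫ x, llr μ ν x ∂μ + 1
  linarith
end
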